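/- arXiv:2505.03389 — 7 statements merged into one kernel-verified Lean document; each statement's English description precedes it below -/
import Mathlib

section
/- Let G be a topological group, D a dense subgroup of G, and ρ : D → ℝ a group homomorphism into the multiplicative group of positive real numbers (i.e., ρ(d) > 0 for all d ∈ D and ρ(d₁d₂) = ρ(d₁)ρ(d₂)). Suppose there is an open neighborhood U of the identity in G such that ρ(d) = 1 for all d ∈ U ∩ D. Then ρ(d) = 1 for every d ∈ D that lies in the connected component of the identity of G. -/
/-!
The elements `d` of `D` with `ρ d = 1` form a subgroup `K` of `D` containing the neighbourhood
`D ∩ U` of `1`, so `K` is open, hence also closed, in `D`. By density of `D`, the closure of `K`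
in `G` contains `U`; being a subgroup, it is then an open and therefore clopen subgroup of `G`,
so it contains the identity component. Finally, an element of `D` in the closure of `K` lies in
the closure of `K` relative to `D`, which is `K` itself.
-/

open Topology

namespace Subgroup

variable {G : Type*} [Group G] [TopologicalSpace G] [IsTopologicalGroup G]

theorem connectedComponent_one_subset_topologicalClosure (H : Subgroup G)
    (hH : (H.topologicalClosure : Set G) ∈ 𝓝 1) :
    connectedComponent 1 ⊆ (H.topologicalClosure : Set G) :=
  IsClopen.connectedComponent_subset
    ⟨H.isClosed_topologicalClosure, H.topologicalClosure.isOpen_of_mem_nhds hH⟩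
    H.topologicalClosure.one_mem

theorem topologicalClosure_map_subtype_mem_nhds {D : Subgroup G} (hD : Dense (D : Set G))
    {K : Subgroup D} (hK : IsOpen (K : Set D)) :
    ((K.map D.subtype).topologicalClosure : Set G) ∈ 𝓝 1 := by
  obtain ⟨V, hVopen, hVK⟩ := isOpen_induced_iff.mp hK
  have hV1 : (1 : D) ∈ Subtype.val ⁻¹' V := hVK ▸ K.one_mem
  rw [topologicalClosure_coe]
  refine Filter.mem_of_superset (hVopen.mem_nhds hV1)
    ((hD.open_subset_closure_inter hVopen).trans (_root_.closure_mono ?_))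
  rintro g ⟨hgV, hgD⟩
  exact ⟨⟨g, hgD⟩, by simpa [← hVK] using hgV, rfl⟩

theorem mem_of_mem_topologicalClosure_map_subtype {D : Subgroup G} {K : Subgroup D}
    (hK : IsOpen (K : Set D)) {d : D}
    (hd : (d : G) ∈ (K.map D.subtype).topologicalClosure) : d ∈ K := by
  rw [← SetLike.mem_coe, topologicalClosure_coe] at hd
  rw [← SetLike.mem_coe, ← (K.isClosed_of_isOpen hK).closure_eq, closure_subtype]
  simpa using hd

theorem mem_of_isOpen_of_mem_connectedComponent_one {D : Subgroup G} (hD : Dense (D : Set G))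
    {K : Subgroup D} (hK : IsOpen (K : Set D)) {d : D}
    (hd : (d : G) ∈ connectedComponent 1) : d ∈ K :=
  mem_of_mem_topologicalClosure_map_subtype hK
    (connectedComponent_one_subset_topologicalClosure _
      (topologicalClosure_map_subtype_mem_nhds hD hK) hd)

end Subgroup

theorem stmt_0_general {G : Type*} [Group G] [TopologicalSpace G] [IsTopologicalGroup G]
    (D : Subgroup G) (hD : Dense (D : Set G))
    (ρ : D → ℝ)
    (hmul : ∀ d₁ d₂ : D, ρ (d₁ * d₂) = ρ d₁ * ρ d₂)
    (U : Set G) (hUopen : IsOpen U) (hUone : (1 : G) ∈ U)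
    (hUtriv : ∀ d : D, (d : G) ∈ U → ρ d = 1) :
    ∀ d : D, (d : G) ∈ connectedComponent (1 : G) → ρ d = 1 := by
  let f : D →* ℝ := { toFun := ρ, map_one' := hUtriv 1 hUone, map_mul' := hmul }
  have hUD : ((↑) ⁻¹' U : Set D) ∈ 𝓝 1 :=
    (hUopen.preimage continuous_subtype_val).mem_nhds hUone
  have hker : IsOpen (f.ker : Set D) :=
    f.ker.isOpen_of_mem_nhds (Filter.mem_of_superset hUD fun d hd ↦ hUtriv d hd)
  exact fun d hd ↦ Subgroup.mem_of_isOpen_of_mem_connectedComponent_one hD hker hd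

/-- If `ρ` is a homomorphism from a dense subgroup `D` of a topological group `G` into the
multiplicative group of positive reals, which equals `1` on a neighbourhood of the identity,
then `ρ` equals `1` on every element of `D` lying in the identity component of `G`. -/
theorem stmt_0 {G : Type*} [Group G] [TopologicalSpace G] [IsTopologicalGroup G]
    (D : Subgroup G) (hD : Dense (D : Set G))
    (ρ : D → ℝ) (hpos : ∀ d : D, 0 < ρ d)
    (hmul : ∀ d₁ d₂ : D, ρ (d₁ * d₂) = ρ d₁ * ρ d₂)
    (U : Set G) (hUopen : IsOpen U) (hUone : (1 : G) ∈ U)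
    (hUtriv : ∀ d : D, (d : G) ∈ U → ρ d = 1) :
    ∀ d : D, (d : G) ∈ connectedComponent (1 : G) → ρ d = 1 :=
  stmt_0_general D hD ρ hmul U hUopen hUone hUtriv
end

section
/- Let G be a locally compact Hausdorff topological group acting continuously and properly on a locally compact Hausdorff topological space N, where proper means that the map G × N → N × N, (g, x) ↦ (g • x, x), is a proper map. Assume the action is cocompact: there is a compact set K ⊆ N such that for every x ∈ N there exists g ∈ G with g • x ∈ K. Let ρ : G → ℝ be a continuous group homomorphism into the multiplicative group of positive real numbers. Then there exists a continuous function f : N → ℝ with f(x) > 0 for all x ∈ N and f(g • x) = ρ(g) · f(x) for all g ∈ G and x ∈ N. -/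
open MeasureTheory Set Topology Pointwise

/-!
Average a compactly supported bump `φ ≥ 0`, positive on a compact set `K` meeting every orbit,
against a left Haar measure: `f x = ∫ ρ g * φ (g⁻¹ • x) dg`. Left invariance of the measure
turns the substitution `g ↦ h * g` into `f (h • x) = ρ h * f x`. Properness of the action makes
the integrand supported, uniformly for `x` in a compact set, in the compact set of `g` with
`g • tsupport φ` meeting that set, which gives continuity; cocompactness makes it nonzero
somewhere, which gives positivity.
-/

section TwistedAverage

variable {G N : Type*} [Group G] [MulAction G N] {ρ : G → ℝ} {φ : N → ℝ}

lemma inv_smul_apply_eq_zero_of_notMem [TopologicalSpace N] {M : Type*} [Zero M] {ψ : N → M}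
    {L : Set N} {x : N} (hx : x ∈ L) {g : G} (hg : g ∉ {g : G | (g • tsupport ψ ∩ L).Nonempty}) :
    ψ (g⁻¹ • x) = 0 := by
  by_contra hne
  exact hg ⟨x, ⟨g⁻¹ • x, subset_tsupport ψ hne, smul_inv_smul g x⟩, hx⟩

section Support

variable [TopologicalSpace N] [TopologicalSpace G] [IsTopologicalGroup G] [ProperSMul G N]

lemma hasCompactSupport_twistedAverage_integrand (hφc : HasCompactSupport φ) (x : N) :
    HasCompactSupport fun g : G ↦ ρ g * φ (g⁻¹ • x) :=
  HasCompactSupport.intro (ProperSMul.isCompact_setOfPred_inter_nonempty hφc isCompact_singleton)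
    fun _ hg ↦ by rw [inv_smul_apply_eq_zero_of_notMem (ψ := φ) (mem_singleton x) hg, mul_zero]

end Support

variable [MeasurableSpace G]

noncomputable def twistedAverage (μ : Measure G) (ρ : G → ℝ) (φ : N → ℝ) (x : N) : ℝ :=
  ∫ g, ρ g * φ (g⁻¹ • x) ∂μ

variable {μ : Measure G}

theorem twistedAverage_smul [MeasurableMul G] [μ.IsMulLeftInvariant]
    (hρmul : ∀ g₁ g₂ : G, ρ (g₁ * g₂) = ρ g₁ * ρ g₂) (h : G) (x : N) :
    twistedAverage μ ρ φ (h • x) = ρ h * twistedAverage μ ρ φ x := by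
  unfold twistedAverage
  rw [← integral_mul_left_eq_self _ h, ← integral_const_mul]
  simp only [hρmul, mul_inv_rev, mul_smul, inv_smul_smul, mul_assoc]

variable [TopologicalSpace N] [TopologicalSpace G] [IsTopologicalGroup G] [ContinuousSMul G N]
  [ProperSMul G N] [OpensMeasurableSpace G] [IsFiniteMeasureOnCompacts μ]

theorem continuous_twistedAverage [LocallyCompactSpace N] (hρ : Continuous ρ)
    (hφ : Continuous φ) (hφc : HasCompactSupport φ) : Continuous (twistedAverage μ ρ φ) := by
  refine continuous_iff_continuousAt.2 fun x₀ ↦ ?_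
  obtain ⟨L, hL, hLx₀⟩ := exists_compact_mem_nhds x₀
  have hcont : Continuous fun p : N × G ↦ ρ p.2 * φ (p.2⁻¹ • p.1) := by fun_prop
  exact (continuousOn_integral_of_compact_support
    (ProperSMul.isCompact_setOfPred_inter_nonempty (G := G) hφc hL) hcont.continuousOn
    fun _ _ hx hg ↦ by rw [inv_smul_apply_eq_zero_of_notMem (ψ := φ) hx hg, mul_zero]).continuousAt
    hLx₀

theorem twistedAverage_pos [μ.IsOpenPosMeasure] (hρ : Continuous ρ) (hρpos : ∀ g, 0 < ρ g)
    (hφ : Continuous φ) (hφc : HasCompactSupport φ) (hφnonneg : 0 ≤ φ) {x : N} {g : G}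
    (hgx : φ (g • x) ≠ 0) : 0 < twistedAverage μ ρ φ x := by
  have hcont : Continuous fun h : G ↦ ρ h * φ (h⁻¹ • x) := by fun_prop
  exact hcont.integral_pos_of_hasCompactSupport_nonneg_nonzero
    (hasCompactSupport_twistedAverage_integrand hφc x)
    (fun h ↦ mul_nonneg (hρpos h).le (hφnonneg _)) (x := g⁻¹)
    (mul_ne_zero (hρpos _).ne' (by rwa [inv_inv]))

end TwistedAverage

theorem stmt_2_general {G : Type*} [Group G] [TopologicalSpace G] [IsTopologicalGroup G]
    [LocallyCompactSpace G]
    {N : Type*} [TopologicalSpace N] [LocallyCompactSpace N] [T2Space N]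
    [MulAction G N] [ContinuousSMul G N]
    (hproper : IsProperMap (fun p : G × N => (p.1 • p.2, p.2)))
    (hcocompact : ∃ K : Set N, IsCompact K ∧ ∀ x : N, ∃ g : G, g • x ∈ K)
    (ρ : G → ℝ) (hρcont : Continuous ρ) (hρpos : ∀ g : G, 0 < ρ g)
    (hρmul : ∀ g₁ g₂ : G, ρ (g₁ * g₂) = ρ g₁ * ρ g₂) :
    ∃ f : N → ℝ, Continuous f ∧ (∀ x : N, 0 < f x) ∧
      ∀ (g : G) (x : N), f (g • x) = ρ g * f x := by
  borelize G
  have : ProperSMul G N := ⟨hproper⟩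
  obtain ⟨K, hK, hKcover⟩ := hcocompact
  obtain ⟨φ, hφK, -, hφc, hφ01⟩ :=
    exists_continuous_one_zero_of_isCompact hK isClosed_empty (disjoint_empty K)
  refine ⟨twistedAverage Measure.haar ρ φ, continuous_twistedAverage hρcont φ.continuous hφc,
    fun x ↦ ?_, twistedAverage_smul hρmul⟩
  obtain ⟨g, hgx⟩ := hKcover x
  exact twistedAverage_pos hρcont hρpos φ.continuous hφc (fun y ↦ (hφ01 y).1)
    (by rw [hφK hgx]; exact one_ne_zero)

/-- If a locally compact Hausdorff group `G` acts continuously, properly and cocompactly on a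
locally compact Hausdorff space `N`, and `ρ : G → ℝ` is a continuous homomorphism into the
multiplicative group of positive reals, then there is a positive continuous `ρ`-equivariant
function `f : N → ℝ`. -/
theorem stmt_2 {G : Type*} [Group G] [TopologicalSpace G] [IsTopologicalGroup G]
    [LocallyCompactSpace G] [T2Space G]
    {N : Type*} [TopologicalSpace N] [LocallyCompactSpace N] [T2Space N]
    [MulAction G N] [ContinuousSMul G N]
    (hproper : IsProperMap (fun p : G × N => (p.1 • p.2, p.2)))
    (hcocompact : ∃ K : Set N, IsCompact K ∧ ∀ x : N, ∃ g : G, g • x ∈ K)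
    (ρ : G → ℝ) (hρcont : Continuous ρ) (hρpos : ∀ g : G, 0 < ρ g)
    (hρmul : ∀ g₁ g₂ : G, ρ (g₁ * g₂) = ρ g₁ * ρ g₂) :
    ∃ f : N → ℝ, Continuous f ∧ (∀ x : N, 0 < f x) ∧
      ∀ (g : G) (x : N), f (g • x) = ρ g * f x :=
  stmt_2_general hproper hcocompact ρ hρcont hρpos hρmul
end

section
/- Let G be a set of self-maps of ℂ, each of the form z ↦ a z + b with a, b ∈ ℂ and |a| = 1, which contains the identity, is closed under composition and under inversion, and whose elements pairwise commute. Assume G acts transitively on ℂ: for all z, w ∈ ℂ there is g ∈ G with g(z) = w. Then every element of G is a translation, i.e., of the form z ↦ z + b. -/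
/-!
An affine map `z ↦ a z + b` with `a ≠ 1` has a fixed point. A map commuting with a transitive
family moves its fixed points along that family, so a fixed point forces it to be the identity.
Hence every element of `G` either has `a = 1` or is the identity; both are translations.
-/

open Function

theorem isFixedPt_affine_of_ne_one {K : Type*} [Field K] {a : K} (b : K) (ha : a ≠ 1) :
    IsFixedPt (fun z => a * z + b) (b / (1 - a)) := by
  have : 1 - a ≠ 0 := sub_ne_zero.mpr ha.symm
  change a * (b / (1 - a)) + b = b / (1 - a)
  field_simp
  ring

theorem eq_self_of_isFixedPt_of_commute {α : Type*} {G : Set (α → α)} {g : α → α} {p : α}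
    (htrans : ∀ z w : α, ∃ h ∈ G, h z = w) (hcomm : ∀ h ∈ G, Function.Commute h g)
    (hp : IsFixedPt g p) (z : α) : g z = z := by
  obtain ⟨h, hG, rfl⟩ := htrans p z
  exact hp.map (hcomm h hG)

theorem stmt_5_general (G : Set (ℂ → ℂ))
    (hform : ∀ g ∈ G, ∃ a b : ℂ, ‖a‖ = 1 ∧ ∀ z : ℂ, g z = a * z + b)
    (hcomm : ∀ g ∈ G, ∀ h ∈ G, ∀ z : ℂ, g (h z) = h (g z))
    (htrans : ∀ z w : ℂ, ∃ g ∈ G, g z = w) :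
    ∀ g ∈ G, ∃ b : ℂ, ∀ z : ℂ, g z = z + b := by
  intro g hg
  obtain ⟨a, b, -, hg_eq⟩ := hform g hg
  rcases eq_or_ne a 1 with rfl | ha
  · exact ⟨b, fun z => by rw [hg_eq, one_mul]⟩
  · have hfix : IsFixedPt g (b / (1 - a)) := by
      rw [funext hg_eq]
      exact isFixedPt_affine_of_ne_one b ha
    refine ⟨0, fun z => ?_⟩
    rw [add_zero]
    exact eq_self_of_isFixedPt_of_commute htrans (fun h hh x => (hcomm g hg h hh x).symm) hfix z

/-- A commuting family of orientation-preserving Euclidean isometries of `ℂ ≅ ℝ²` (maps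
`z ↦ a z + b` with `|a| = 1`), closed under composition and inversion, containing the identity,
and acting transitively on `ℂ`, consists only of translations. -/
theorem stmt_5 (G : Set (ℂ → ℂ))
    (hform : ∀ g ∈ G, ∃ a b : ℂ, ‖a‖ = 1 ∧ ∀ z : ℂ, g z = a * z + b)
    (hid : id ∈ G)
    (hcomp : ∀ g ∈ G, ∀ h ∈ G, g ∘ h ∈ G)
    (hinv : ∀ g ∈ G, ∃ g' ∈ G, (∀ z : ℂ, g' (g z) = z) ∧ (∀ z : ℂ, g (g' z) = z))
    (hcomm : ∀ g ∈ G, ∀ h ∈ G, ∀ z : ℂ, g (h z) = h (g z))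
    (htrans : ∀ z w : ℂ, ∃ g ∈ G, g z = w) :
    ∀ g ∈ G, ∃ b : ℂ, ∀ z : ℂ, g z = z + b :=
  stmt_5_general G hform hcomm htrans
end

section
/- Let G be a topological group, K a compact subgroup of G, and P an arbitrary subgroup of G. Suppose there is a compact set C ⊆ G such that every element g ∈ G can be written g = p·c·k with p ∈ P, c ∈ C, k ∈ K. Then: (i) there is a compact set C₁ ⊆ G such that every g ∈ G can be written g = p·c₁ with p ∈ P and c₁ ∈ C₁; and (ii) for every closed subgroup H of G containing P, there is a compact set C₂ ⊆ H such that every h ∈ H can be written h = p·c₂ with p ∈ P and c₂ ∈ C₂. -/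
open Pointwise

theorem exists_mem_mul_of_exists_mul_mul {G : Type*} [Semigroup G] {P C K : Set G}
    (hdecomp : ∀ g : G, ∃ p ∈ P, ∃ c ∈ C, ∃ k ∈ K, g = p * c * k) (g : G) :
    ∃ p ∈ P, ∃ c ∈ C * K, g = p * c := by
  obtain ⟨p, hp, c, hc, k, hk, rfl⟩ := hdecomp g
  exact ⟨p, hp, c * k, Set.mul_mem_mul hc hk, mul_assoc p c k⟩

theorem Subgroup.exists_mem_inter_of_exists_mul {G : Type*} [Group G] {P D : Set G}
    {H : Subgroup G} (hPH : P ⊆ H) (hcover : ∀ g : G, ∃ p ∈ P, ∃ c ∈ D, g = p * c)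
    {h : G} (hh : h ∈ H) : ∃ p ∈ P, ∃ c ∈ D ∩ H, h = p * c := by
  obtain ⟨p, hp, c, hc, rfl⟩ := hcover h
  exact ⟨p, hp, c, ⟨hc, (H.mul_mem_cancel_left (hPH hp)).mp hh⟩, rfl⟩

/-- If `G = P·C·K` with `C` compact and `K` a compact subgroup, then `P` is cocompact in `G`,
and `P` is cocompact in every closed subgroup `H` of `G` containing `P`. -/
theorem stmt_6 {G : Type*} [Group G] [TopologicalSpace G] [IsTopologicalGroup G]
    (K : Subgroup G) (hK : IsCompact (K : Set G))
    (P : Subgroup G)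
    (C : Set G) (hC : IsCompact C)
    (hdecomp : ∀ g : G, ∃ p ∈ P, ∃ c ∈ C, ∃ k ∈ K, g = p * c * k) :
    (∃ C₁ : Set G, IsCompact C₁ ∧ ∀ g : G, ∃ p ∈ P, ∃ c ∈ C₁, g = p * c) ∧
      (∀ H : Subgroup G, IsClosed (H : Set G) → P ≤ H →
        ∃ C₂ : Set G, C₂ ⊆ (H : Set G) ∧ IsCompact C₂ ∧
          ∀ h ∈ H, ∃ p ∈ P, ∃ c ∈ C₂, h = p * c) := by
  have hCK : IsCompact (C * (K : Set G)) := hC.mul hK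
  have hcover := exists_mem_mul_of_exists_mul_mul hdecomp
  refine ⟨⟨C * K, hCK, hcover⟩, fun H hH hPH => ?_⟩
  exact ⟨C * K ∩ H, Set.inter_subset_right, hCK.inter_right hH,
    fun h hh => Subgroup.exists_mem_inter_of_exists_mul hPH hcover hh⟩
end

section
/- Let E = EuclideanSpace ℝ (Fin q) and F = EuclideanSpace ℝ (Fin m) with q ≥ 1, m ≥ 1. Let g_E : E ≃ E and g_F : F ≃ F be linear automorphisms and λ, μ > 0 real numbers with ‖g_E(x)‖ = λ‖x‖ for all x ∈ E and ‖g_F(y)‖ = μ‖y‖ for all y ∈ F. Let b be a basis of E × F over ℝ, and let Λ be the ℤ-span of the basis vectors of b. If the product automorphism g := g_E × g_F of E × F maps Λ bijectively onto Λ, then λ^q · μ^m = 1. -/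
/-!
A linear similarity of ratio `c > 0` is `c` times an isometry, so on an `n`-dimensional space its
determinant has absolute value `c ^ n`; hence `|det (g_E × g_F)| = λ ^ q * μ ^ m`. On the other
hand `g` restricts to an automorphism of the lattice, whose determinant is a unit of `ℤ` and equals
`det g` because the lattice basis is also an `ℝ`-basis.
-/

open Module Submodule

namespace LinearMap

theorem normDet_eq_pow_finrank_of_norm_map_eq_mul {𝕜 U V : Type*} [RCLike 𝕜]
    [NormedAddCommGroup U] [InnerProductSpace 𝕜 U] [FiniteDimensional 𝕜 U]
    [NormedAddCommGroup V] [InnerProductSpace 𝕜 V]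
    {f : U →ₗ[𝕜] V} {c : ℝ} (hc : 0 < c) (hf : ∀ x, ‖f x‖ = c * ‖x‖) :
    f.normDet = c ^ finrank 𝕜 U := by
  let e : U →ₗᵢ[𝕜] V := ⟨(c⁻¹ : 𝕜) • f, fun x => by
    rw [smul_apply, norm_smul, hf, norm_inv, RCLike.norm_ofReal, abs_of_pos hc,
      inv_mul_cancel_left₀ hc.ne']⟩
  have hfe : f = (c : 𝕜) • e.toLinearMap := by
    ext x
    simp [e, smul_smul, hc.ne']
  rw [hfe, normDet_smul, e.normDet_eq_one, RCLike.norm_ofReal, abs_of_pos hc, mul_one]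

theorem det_eq_algebraMap_det_of_restrict {R S M ι : Type*} [CommRing R] [IsDomain R]
    [CommRing S] [Nontrivial S] [Algebra R S] [IsTorsionFree R S]
    [AddCommGroup M] [Module S M] [Module R M] [IsScalarTower R S M]
    [Fintype ι] (b : Basis ι S M) (f : M →ₗ[S] M)
    (fR : span R (Set.range b) →ₗ[R] span R (Set.range b)) (hf : ∀ x, (fR x : M) = f x) :
    LinearMap.det f = algebraMap R S (LinearMap.det fR) := by
  classical
  rw [← det_toMatrix b, ← det_toMatrix (b.restrictScalars R), RingHom.map_det]
  congr 1
  ext i j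
  simp [toMatrix_apply, hf]

end LinearMap

theorem LinearEquiv.det_eq_one_or_neg_one_of_map_span_eq {K V ι : Type*} [Field K] [CharZero K]
    [AddCommGroup V] [Module K V] [Fintype ι] (b : Basis ι K V) (g : V ≃ₗ[K] V)
    (hg : (span ℤ (Set.range b)).map (g.restrictScalars ℤ : V →ₗ[ℤ] V) = span ℤ (Set.range b)) :
    LinearMap.det (g : V →ₗ[K] V) = 1 ∨ LinearMap.det (g : V →ₗ[K] V) = -1 := by
  let gZ := (g.restrictScalars ℤ).ofSubmodules _ _ hg
  have hunit := Int.isUnit_iff.mp (LinearEquiv.isUnit_det' gZ)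
  rw [LinearMap.det_eq_algebraMap_det_of_restrict b _ (gZ : _ →ₗ[ℤ] _) fun _ => rfl]
  rcases hunit with h | h <;> simp [h]

theorem stmt_8_general (q m : ℕ)
    (gE : EuclideanSpace ℝ (Fin q) ≃ₗ[ℝ] EuclideanSpace ℝ (Fin q))
    (gF : EuclideanSpace ℝ (Fin m) ≃ₗ[ℝ] EuclideanSpace ℝ (Fin m))
    (lam mu : ℝ) (hlam : 0 < lam) (hmu : 0 < mu)
    (hgE : ∀ x : EuclideanSpace ℝ (Fin q), ‖gE x‖ = lam * ‖x‖)
    (hgF : ∀ y : EuclideanSpace ℝ (Fin m), ‖gF y‖ = mu * ‖y‖)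
    {ι : Type*}
    (b : Module.Basis ι ℝ (EuclideanSpace ℝ (Fin q) × EuclideanSpace ℝ (Fin m)))
    (hlattice : ∀ x : EuclideanSpace ℝ (Fin q) × EuclideanSpace ℝ (Fin m),
      x ∈ Submodule.span ℤ (Set.range b) ↔ (gE.prodCongr gF) x ∈ Submodule.span ℤ (Set.range b)) :
    lam ^ q * mu ^ m = 1 := by
  have := FiniteDimensional.fintypeBasisIndex b
  set g := gE.prodCongr gF
  have hmap : (span ℤ (Set.range b)).map (g.restrictScalars ℤ : _ →ₗ[ℤ] _) =
      span ℤ (Set.range b) := by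
    ext x
    rw [mem_map_equiv, hlattice, LinearEquiv.restrictScalars_symm_apply, g.apply_symm_apply]
  have hdet : |LinearMap.det g.toLinearMap| = 1 := by
    rcases g.det_eq_one_or_neg_one_of_map_span_eq b hmap with h | h <;> simp [h]
  rwa [show g.toLinearMap = LinearMap.prodMap gE gF from rfl, LinearMap.det_prodMap, abs_mul,
    ← LinearMap.normDet_eq_abs_det, ← LinearMap.normDet_eq_abs_det,
    LinearMap.normDet_eq_pow_finrank_of_norm_map_eq_mul hlam hgE,
    LinearMap.normDet_eq_pow_finrank_of_norm_map_eq_mul hmu hgF,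
    finrank_euclideanSpace_fin, finrank_euclideanSpace_fin] at hdet

/-- If a product of linear similarities of ratios `λ` (on a `q`-dimensional Euclidean space) and
`μ` (on an `m`-dimensional Euclidean space) preserves the `ℤ`-lattice spanned by an `ℝ`-basis of
the product space, then `λ^q · μ^m = 1`. -/
theorem stmt_8 (q m : ℕ) (hq : 1 ≤ q) (hm : 1 ≤ m)
    (gE : EuclideanSpace ℝ (Fin q) ≃ₗ[ℝ] EuclideanSpace ℝ (Fin q))
    (gF : EuclideanSpace ℝ (Fin m) ≃ₗ[ℝ] EuclideanSpace ℝ (Fin m))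
    (lam mu : ℝ) (hlam : 0 < lam) (hmu : 0 < mu)
    (hgE : ∀ x : EuclideanSpace ℝ (Fin q), ‖gE x‖ = lam * ‖x‖)
    (hgF : ∀ y : EuclideanSpace ℝ (Fin m), ‖gF y‖ = mu * ‖y‖)
    {ι : Type*}
    (b : Module.Basis ι ℝ (EuclideanSpace ℝ (Fin q) × EuclideanSpace ℝ (Fin m)))
    (hlattice : ∀ x : EuclideanSpace ℝ (Fin q) × EuclideanSpace ℝ (Fin m),
      x ∈ Submodule.span ℤ (Set.range b) ↔ (gE.prodCongr gF) x ∈ Submodule.span ℤ (Set.range b)) :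
    lam ^ q * mu ^ m = 1 :=
  stmt_8_general q m gE gF lam mu hlam hmu hgE hgF b hlattice
end

section
/- Let A be the 4 × 4 real matrix with blocks B = [[2, 1], [1, 1]] on the diagonal, i.e., A has entries A₀₀ = 2, A₀₁ = A₁₀ = 1, A₁₁ = 1, A₂₂ = 2, A₂₃ = A₃₂ = 1, A₃₃ = 1, and all other entries 0. Then det A = 1, and there exist a real number λ > 1 and subspaces E, F of ℝ⁴ (with the standard Euclidean norm) such that E ∩ F = {0}, E + F = ℝ⁴, dim E = dim F = 2, A maps E into E and F into F, ‖A v‖ = λ‖v‖ for every v ∈ E, and ‖A v‖ = λ⁻¹‖v‖ for every v ∈ F. -/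
/-!
The matrix is two diagonal copies of Arnold's cat map `[[2, 1], [1, 1]]`, the square of the
Fibonacci matrix. For either root `x` of `x² = x + 1` (the golden ratio `φ` and its conjugate
`ψ`), the vectors `(x, 1, 0, 0)` and `(0, 0, x, 1)` are eigenvectors with eigenvalue `x²`, and
`ψ² = (φ²)⁻¹`. Hence both eigenspaces have dimension at least two; being eigenspaces for distinct
eigenvalues they are disjoint, so in `ℝ⁴` both have dimension exactly two and together span.
On an eigenspace the map is a scalar, hence a similarity.
-/

open Real Module Module.End Submodule
open scoped goldenRatio

section

variable {K V : Type*} [DivisionRing K] [AddCommGroup V] [Module K V] [FiniteDimensional K V]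

theorem Submodule.finrank_eq_and_sup_eq_top_of_disjoint {E F : Submodule K V} {m n : ℕ}
    (hE : m ≤ finrank K E) (hF : n ≤ finrank K F) (hV : finrank K V = m + n)
    (hEF : Disjoint E F) : finrank K E = m ∧ finrank K F = n ∧ E ⊔ F = ⊤ := by
  have hsum := finrank_add_finrank_le_of_disjoint hEF
  exact ⟨by omega, by omega, eq_top_of_disjoint E F (by omega) hEF⟩

theorem Submodule.two_le_finrank_of_linearIndependent_pair {E : Submodule K V} {u v : V}
    (hu : u ∈ E) (hv : v ∈ E) (huv : LinearIndependent K ![u, v]) : 2 ≤ finrank K E := by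
  have hspan : span K (Set.range ![u, v]) ≤ E := by
    rw [span_le, Matrix.range_cons, Matrix.range_cons, Matrix.range_empty, Set.union_empty,
      Set.singleton_union, Set.insert_subset_iff, Set.singleton_subset_iff]
    exact ⟨hu, hv⟩
  simpa [finrank_span_eq_card huv] using finrank_mono hspan

end

theorem Module.End.apply_mem_eigenspace {R M : Type*} [CommRing R] [AddCommGroup M] [Module R M]
    {f : End R M} {μ : R} {v : M} (hv : v ∈ f.eigenspace μ) : f v ∈ f.eigenspace μ :=
  (mem_eigenspace_iff.mp hv).symm ▸ smul_mem _ μ hv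

theorem Module.End.norm_apply_of_mem_eigenspace {𝕜 V : Type*} [NormedField 𝕜]
    [SeminormedAddCommGroup V] [NormedSpace 𝕜 V] {f : End 𝕜 V} {μ : 𝕜} {v : V}
    (hv : v ∈ f.eigenspace μ) : ‖f v‖ = ‖μ‖ * ‖v‖ := by
  rw [mem_eigenspace_iff.mp hv, norm_smul]

def catMapPair : Matrix (Fin 4) (Fin 4) ℝ := !![2, 1, 0, 0; 1, 1, 0, 0; 0, 0, 2, 1; 0, 0, 1, 1]

theorem det_catMapPair : catMapPair.det = 1 := by
  simp [catMapPair, Matrix.det_succ_row_zero, Fin.sum_univ_succ, Fin.succAbove]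
  norm_num

section

variable {x : ℝ}

theorem toEuclideanLin_catMapPair_first (hx : x ^ 2 = x + 1) :
    Matrix.toEuclideanLin catMapPair !₂[x, 1, 0, 0] = x ^ 2 • !₂[x, 1, 0, 0] := by
  ext i
  fin_cases i <;> simp [catMapPair] <;> nlinarith

theorem toEuclideanLin_catMapPair_second (hx : x ^ 2 = x + 1) :
    Matrix.toEuclideanLin catMapPair !₂[0, 0, x, 1] = x ^ 2 • !₂[0, 0, x, 1] := by
  ext i
  fin_cases i <;> simp [catMapPair] <;> nlinarith

theorem two_le_finrank_eigenspace_catMapPair (hx : x ^ 2 = x + 1) :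
    2 ≤ finrank ℝ (eigenspace (Matrix.toEuclideanLin catMapPair) (x ^ 2)) := by
  refine two_le_finrank_of_linearIndependent_pair
    (mem_eigenspace_iff.mpr (toEuclideanLin_catMapPair_first hx))
    (mem_eigenspace_iff.mpr (toEuclideanLin_catMapPair_second hx)) ?_
  rw [LinearIndependent.pair_iff]
  intro a b h
  have h1 := congrArg (· 1) h
  have h3 := congrArg (· 3) h
  simp at h1 h3
  exact ⟨h1, h3⟩

end

/-- The block-diagonal matrix with blocks `[[2,1],[1,1]]` has determinant `1` and splits
`ℝ⁴ = E ⊕ F` into two 2-dimensional invariant subspaces on which it acts as a similarity of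
ratio `λ > 1` and `λ⁻¹` respectively (for the standard Euclidean norm). -/
theorem stmt_14 (A : Matrix (Fin 4) (Fin 4) ℝ)
    (hA : A = !![2, 1, 0, 0; 1, 1, 0, 0; 0, 0, 2, 1; 0, 0, 1, 1]) :
    A.det = 1 ∧
    ∃ lam : ℝ, 1 < lam ∧
      ∃ E F : Submodule ℝ (EuclideanSpace ℝ (Fin 4)),
        E ⊓ F = ⊥ ∧ E ⊔ F = ⊤ ∧
        Module.finrank ℝ E = 2 ∧ Module.finrank ℝ F = 2 ∧
        (∀ v ∈ E, Matrix.toEuclideanLin A v ∈ E) ∧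
        (∀ v ∈ F, Matrix.toEuclideanLin A v ∈ F) ∧
        (∀ v ∈ E, ‖Matrix.toEuclideanLin A v‖ = lam * ‖v‖) ∧
        (∀ v ∈ F, ‖Matrix.toEuclideanLin A v‖ = lam⁻¹ * ‖v‖) := by
  obtain rfl : A = catMapPair := hA
  set f := Matrix.toEuclideanLin catMapPair
  have hlam : 1 < φ ^ 2 := one_lt_pow₀ one_lt_goldenRatio two_ne_zero
  have hψ : ψ ^ 2 = (φ ^ 2)⁻¹ := by rw [← inv_pow, inv_goldenRatio, neg_sq]
  have hdisj : Disjoint (eigenspace f (φ ^ 2)) (eigenspace f (φ ^ 2)⁻¹) :=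
    (eigenspaces_iSupIndep f).pairwiseDisjoint ((inv_lt_one_of_one_lt₀ hlam).trans hlam).ne'
  obtain ⟨hE, hF, hsup⟩ := finrank_eq_and_sup_eq_top_of_disjoint
    (two_le_finrank_eigenspace_catMapPair goldenRatio_sq)
    (hψ ▸ two_le_finrank_eigenspace_catMapPair goldenConj_sq) (by simp) hdisj
  refine ⟨det_catMapPair, φ ^ 2, hlam, _, _, hdisj.eq_bot, hsup, hE, hF,
    fun _ ↦ apply_mem_eigenspace, fun _ ↦ apply_mem_eigenspace, fun _ hv ↦ ?_, fun _ hv ↦ ?_⟩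
  all_goals rw [norm_apply_of_mem_eigenspace hv, norm_of_nonneg (by positivity)]
end

section
/- Let X be a metric space and H a subgroup of the group of bijective isometries of X acting cocompactly: there is a compact set K ⊆ X such that for every x ∈ X there exists h ∈ H with h(x) ∈ K. Suppose there exist a real number λ with 0 < λ < 1 and a bijection p : X → X satisfying d(p(x), p(y)) = λ·d(x, y) for all x, y ∈ X and p H p⁻¹ ⊆ H (i.e., for every h ∈ H the map x ↦ p(h(p⁻¹(x))) belongs to H). Then for every ε > 0 there exists a compact set K' ⊆ X of diameter at most ε such that for every x ∈ X there exists h ∈ H with h(x) ∈ K'. -/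
/-!
Conjugation by `p` carries a compact set meeting every `H`-orbit to another such set, namely its
image under `p`, whose diameter is multiplied by `λ`. Iterating `n` times shrinks the diameter of
the cocompactness witness by `λ ^ n`, which tends to `0`.
-/

open Metric

section OrbitTransversal

variable {X G : Type*} [FunLike G X X]

def MeetsEveryOrbit (S : Set G) (K : Set X) : Prop :=
  ∀ x : X, ∃ h ∈ S, h x ∈ K

/-- `p S p⁻¹ ⊆ S`. -/
def ConjNormalizes (p : X ≃ X) (S : Set G) : Prop :=
  ∀ h ∈ S, ∃ h' ∈ S, ∀ x : X, p (h (p.symm x)) = h' x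

theorem MeetsEveryOrbit.image {S : Set G} {K : Set X} {p : X ≃ X}
    (hK : MeetsEveryOrbit S K) (hp : ConjNormalizes p S) : MeetsEveryOrbit S (p '' K) := by
  intro x
  obtain ⟨h, hh, hmem⟩ := hK (p.symm x)
  obtain ⟨h', hh', hconj⟩ := hp h hh
  exact ⟨h', hh', hconj x ▸ Set.mem_image_of_mem p hmem⟩

theorem MeetsEveryOrbit.image_iterate {S : Set G} {K : Set X} {p : X ≃ X}
    (hK : MeetsEveryOrbit S K) (hp : ConjNormalizes p S) (n : ℕ) :
    MeetsEveryOrbit S ((⇑p)^[n] '' K) := by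
  induction n with
  | zero => simpa using hK
  | succ n ih =>
    rw [Function.iterate_succ', Set.image_comp]
    exact ih.image hp

end OrbitTransversal

theorem exists_pow_mul_le {lam : ℝ} (hlam0 : 0 ≤ lam) (hlam1 : lam < 1) (D : ℝ) {ε : ℝ}
    (hε : 0 < ε) : ∃ n : ℕ, lam ^ n * D ≤ ε := by
  have hlim : Filter.Tendsto (fun n : ℕ => lam ^ n * D) Filter.atTop (nhds 0) := by
    simpa using (tendsto_pow_atTop_nhds_zero_of_lt_one hlam0 hlam1).mul_const D
  exact (hlim.eventually (ge_mem_nhds hε)).exists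

/-- If a group `H` of isometries of a metric space `X` acts cocompactly and is normalized by a
contracting similarity `p` of ratio `0 < λ < 1` (with `p H p⁻¹ ⊆ H`), then for every `ε > 0`
there is a compact set of diameter at most `ε` meeting every `H`-orbit. -/
theorem stmt_15 {X : Type*} [MetricSpace X] (H : Subgroup (X ≃ᵢ X))
    (hcocompact : ∃ K : Set X, IsCompact K ∧ ∀ x : X, ∃ h ∈ H, h x ∈ K)
    (lam : ℝ) (hlam0 : 0 < lam) (hlam1 : lam < 1) (p : X ≃ X)
    (hp : ∀ x y : X, dist (p x) (p y) = lam * dist x y)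
    (hnorm : ∀ h ∈ H, ∃ h' ∈ H, ∀ x : X, p (h (p.symm x)) = h' x) :
    ∀ ε : ℝ, 0 < ε → ∃ K' : Set X, IsCompact K' ∧ Metric.diam K' ≤ ε ∧
      ∀ x : X, ∃ h ∈ H, h x ∈ K' := by
  obtain ⟨K, hK, hKmeets⟩ := hcocompact
  have hlip : LipschitzWith ⟨lam, hlam0.le⟩ p := .of_dist_le_mul fun x y => (hp x y).le
  intro ε hε
  obtain ⟨n, hn⟩ := exists_pow_mul_le hlam0.le hlam1 (diam K) hε
  have hlip_n := hlip.iterate n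
  refine ⟨(⇑p)^[n] '' K, hK.image hlip_n.continuous, ?_,
    MeetsEveryOrbit.image_iterate (S := (H : Set (X ≃ᵢ X))) hKmeets hnorm n⟩
  calc diam ((⇑p)^[n] '' K) ≤ lam ^ n * diam K := by
        exact_mod_cast hlip_n.diam_image_le K hK.isBounded
    _ ≤ ε := hn
end
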